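/- arXiv:math/9806083 — 2 statements merged into one kernel-verified Lean document; each statement's English description precedes it below -/
import Mathlib

section
/- Let V be a finite-dimensional real vector space with a symplectic form ω, and let J be a compatible complex structure making (V, ω, J) a Hermitian vector space with a complex volume form Ω of unit norm. If L ⊂ V is a Lagrangian subspace on which Im Ω vanishes, then Re Ω restricts to a nonvanishing volume form on L. -/
/-!
A Lagrangian subspace `L` of `ℂ^m` is totally real: `L ∩ I • L = 0`, because for `x, y ∈ L`
the imaginary part of `⟪y, x + I y⟫` is `ω(y, x) + ‖y‖² = ‖y‖²`. Hence a real basis of `L` is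
also `ℂ`-linearly independent, so `Ω` does not vanish on it; as `Im Ω` does, `Re Ω` cannot.
-/

open Complex

section

variable {E : Type*} [NormedAddCommGroup E] [InnerProductSpace ℂ E] {L : Submodule ℝ E}

theorem eq_zero_of_add_I_smul_eq_zero (hL : ∀ x ∈ L, ∀ y ∈ L, (inner ℂ x y).im = 0)
    {x y : E} (hx : x ∈ L) (hy : y ∈ L) (h : x + I • y = 0) : y = 0 := by
  have him : (inner ℂ y (x + I • y)).im = ‖y‖ ^ 2 := by
    rw [inner_add_right, inner_smul_right, inner_self_eq_norm_sq_to_K, add_im, hL y hy x hx,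
      zero_add]
    simp [mul_im, ← ofReal_pow]
  rw [h, inner_zero_right, zero_im] at him
  exact norm_eq_zero.mp (pow_eq_zero_iff two_ne_zero |>.mp him.symm)

theorem LinearIndependent.complex_of_isotropic (hL : ∀ x ∈ L, ∀ y ∈ L, (inner ℂ x y).im = 0)
    {ι : Type*} [Fintype ι] {v : ι → E} (hv : LinearIndependent ℝ v) (hvL : ∀ i, v i ∈ L) :
    LinearIndependent ℂ v := by
  rw [Fintype.linearIndependent_iff] at hv ⊢
  intro c hc
  set x := ∑ i, (c i).re • v i
  set y := ∑ i, (c i).im • v i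
  have hxL : x ∈ L := L.sum_mem fun i _ => L.smul_mem _ (hvL i)
  have hyL : y ∈ L := L.sum_mem fun i _ => L.smul_mem _ (hvL i)
  have hxy : x + I • y = ∑ i, c i • v i := by
    simp only [x, y, Finset.smul_sum, ← Finset.sum_add_distrib, ← Complex.coe_smul, smul_smul,
      ← add_smul]
    congr! 2 with i
    rw [mul_comm, re_add_im]
  have hy0 : y = 0 := eq_zero_of_add_I_smul_eq_zero hL hxL hyL (hxy.trans hc)
  have hx0 : x = 0 := by simpa [hy0, hc] using hxy
  exact fun i => Complex.ext (hv _ hx0 i) (hv _ hy0 i)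

end

theorem det_ne_zero_of_linearIndependent {m : ℕ} {v : Fin m → EuclideanSpace ℂ (Fin m)}
    (hv : LinearIndependent ℂ v) : (Matrix.of fun i j => v j i).det ≠ 0 := by
  have hcol : LinearIndependent ℂ (Matrix.of fun i j => v j i).col :=
    hv.map' (WithLp.linearEquiv 2 ℂ (Fin m → ℂ)).toLinearMap (LinearEquiv.ker _)
  exact (Matrix.isUnit_iff_isUnit_det _ |>.mp
    (Matrix.linearIndependent_cols_iff_isUnit.mp hcol)).ne_zero

theorem stmt11_general (m : ℕ)
    (L : Submodule ℝ (EuclideanSpace ℂ (Fin m)))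
    (hLag : ∀ x ∈ L, ∀ y ∈ L, (inner ℂ x y : ℂ).im = 0)
    (hIm : ∀ v : Fin m → EuclideanSpace ℂ (Fin m), (∀ j, v j ∈ L) →
      (Matrix.det (Matrix.of fun i j => v j i)).im = 0) :
    ∀ b : Module.Basis (Fin m) ℝ L,
      (Matrix.det (Matrix.of fun i j => ((b j : EuclideanSpace ℂ (Fin m)) i))).re ≠ 0 := by
  intro b hre
  have hbL : ∀ j, (b j : EuclideanSpace ℂ (Fin m)) ∈ L := fun j => (b j).2
  have hind : LinearIndependent ℂ fun j => (b j : EuclideanSpace ℂ (Fin m)) :=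
    (b.linearIndependent.map' L.subtype L.ker_subtype).complex_of_isotropic hLag hbL
  exact det_ne_zero_of_linearIndependent hind (Complex.ext hre (hIm _ hbL))

/-- V = ℂ^m with its standard Hermitian structure, symplectic form
ω(x,y) = Im⟪x,y⟫, compatible complex structure J = i, and complex volume form
Ω = dz¹∧…∧dz^m of unit norm (here Ω evaluated on vectors v₁,…,v_m is the determinant
det(vⱼ)ᵢ of their components).  If L is a real m-dimensional subspace which is
Lagrangian (ω|_L = 0) and on which Im Ω vanishes, then Re Ω is nonvanishing on L:
for every real basis b of L, Re Ω(b₁,…,b_m) ≠ 0 (so Re Ω is a volume form on L). -/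
theorem stmt11 (m : ℕ)
    (L : Submodule ℝ (EuclideanSpace ℂ (Fin m)))
    (hdim : Module.finrank ℝ L = m)
    (hLag : ∀ x ∈ L, ∀ y ∈ L, (inner ℂ x y : ℂ).im = 0)
    (hIm : ∀ v : Fin m → EuclideanSpace ℂ (Fin m), (∀ j, v j ∈ L) →
      (Matrix.det (Matrix.of fun i j => v j i)).im = 0) :
    ∀ b : Module.Basis (Fin m) ℝ L,
      (Matrix.det (Matrix.of fun i j => ((b j : EuclideanSpace ℂ (Fin m)) i))).re ≠ 0 :=
  stmt11_general m L hLag hIm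
end

section
/- Let Y be a complex manifold with nowhere-vanishing holomorphic m-form Ω and X ⊂ Y a compact real slice with Im Ω|_X = 0 (so Re Ω|_X is a volume form on X). If X_t is a smooth family of such 'special real slices' with X_0 = X, generated by a normal field with potential Ψ ∈ C^∞(X), then the first-order variation of Im(Ω|_{X_t}) at t = 0 equals (ΔΨ)·Re(Ω|_X), where Δ is the second-order divergence-type operator determined by Re Ω|_X; in particular Ψ lies in the kernel of Δ. -/
noncomputable section

/-- Inclusion of the real slice ℝ^m ⊆ ℂ^m. -/
def stmt18.toC (m : ℕ) (x : Fin m → ℝ) : Fin m → ℂ := fun j => (x j : ℂ)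

/-- The family of real slices X_t = {x + i ψ(x,t)} ⊆ ℂ^m. -/
def stmt18.z (m : ℕ) (ψ : (Fin m → ℝ) → ℝ → Fin m → ℝ) (x : Fin m → ℝ) (t : ℝ) :
    Fin m → ℂ := fun j => (x j : ℂ) + Complex.I * (ψ x t j : ℂ)

/-- The (complex) Jacobian matrix of the embedding x ↦ z(x,t) of X_t. -/
def stmt18.Jmat (m : ℕ) (ψ : (Fin m → ℝ) → ℝ → Fin m → ℝ) (x : Fin m → ℝ) (t : ℝ) :
    Matrix (Fin m) (Fin m) ℂ :=
  Matrix.of fun i j => fderiv ℝ (fun y => stmt18.z m ψ y t i) x (Pi.single j 1)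

/-- The coefficient of Im(Ω|_{X_t}) against dx¹∧…∧dx^m, for Ω = ρ dz¹∧…∧dz^m. -/
def stmt18.ImRest (m : ℕ) (ρ : (Fin m → ℂ) → ℂ) (ψ : (Fin m → ℝ) → ℝ → Fin m → ℝ)
    (x : Fin m → ℝ) (t : ℝ) : ℝ :=
  (ρ (stmt18.z m ψ x t) * (stmt18.Jmat m ψ x t).det).im

/-- The divergence-type second order operator Δ determined by the volume form
Re(Ω|_X) = ρ₀ dx, ρ₀ = Re ρ|_X : ΔΨ = (Σᵢ ∂ᵢ(ρ₀ ∂ᵢΨ))/ρ₀. -/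
def stmt18.lap (m : ℕ) (ρ : (Fin m → ℂ) → ℂ) (Ψ : (Fin m → ℝ) → ℝ) (x : Fin m → ℝ) : ℝ :=
  (∑ i, fderiv ℝ (fun y => (ρ (stmt18.toC m y)).re * fderiv ℝ Ψ y (Pi.single i 1)) x
      (Pi.single i 1)) / (ρ (stmt18.toC m x)).re

namespace stmt18x
variable {E : Type*} [NormedAddCommGroup E] [NormedSpace ℝ E]

def toCL (m : ℕ) : ((Fin m → ℝ) →L[ℝ] (Fin m → ℂ)) :=
  ContinuousLinearMap.pi fun j => Complex.ofRealCLM.comp (ContinuousLinearMap.proj j)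

lemma toCL_single {m : ℕ} (j : Fin m) : toCL m (Pi.single j 1) = Pi.single j (1 : ℂ) := by
  funext k
  simp [toCL, Pi.single_apply]
  split <;> simp

lemma slice_fderiv {F : E × ℝ → ℝ} (hF : ContDiff ℝ (⊤ : ℕ∞) F) (x : E) (t : ℝ) (v : E) :
    fderiv ℝ (fun y => F (y, t)) x v = fderiv ℝ F (x, t) (v, 0) := by
  have h : HasFDerivAt (fun y : E => F (y, t))
      ((fderiv ℝ F (x, t)).comp ((ContinuousLinearMap.id ℝ E).prod 0)) x :=
    HasFDerivAt.comp x (hF.differentiable (by simp) (x, t)).hasFDerivAt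
      ((hasFDerivAt_id x).prodMk (hasFDerivAt_const t x))
  rw [h.fderiv]; rfl

lemma slice_deriv {F : E × ℝ → ℝ} (hF : ContDiff ℝ (⊤ : ℕ∞) F) (y : E) :
    deriv (fun t => F (y, t)) 0 = fderiv ℝ F (y, 0) (0, 1) := by
  have h : HasDerivAt (fun t => F (y, t)) (fderiv ℝ F (y, 0) (0, 1)) 0 :=
    (hF.differentiable (by simp) (y, 0)).hasFDerivAt.comp_hasDerivAt 0
      (HasDerivAt.prodMk (hasDerivAt_const (0:ℝ) y) (hasDerivAt_id (0:ℝ)))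
  exact h.deriv

lemma mixed {F : E × ℝ → ℝ} (hF : ContDiff ℝ (⊤ : ℕ∞) F) (x : E) (v : E) :
    HasDerivAt (fun t => fderiv ℝ (fun y => F (y, t)) x v)
      (fderiv ℝ (fun y => deriv (fun t => F (y, t)) 0) x v) 0 := by
  have hF' : ContDiff ℝ (⊤ : ℕ∞) (fderiv ℝ F) := hF.fderiv_right (by simp)
  set f'' := fderiv ℝ (fderiv ℝ F) (x, 0) with hf''
  have h1 : HasDerivAt (fun t => fderiv ℝ F (x, t)) (f'' (0, 1)) 0 :=
    (hF'.differentiable (by simp) (x, 0)).hasFDerivAt.comp_hasDerivAt 0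
      (HasDerivAt.prodMk (hasDerivAt_const (0:ℝ) x) (hasDerivAt_id (0:ℝ)))
  have h2 : HasDerivAt (fun t => fderiv ℝ F (x, t) (v, 0)) (f'' (0, 1) (v, 0)) 0 :=
    (ContinuousLinearMap.apply ℝ ℝ ((v, 0) : E × ℝ)).hasFDerivAt.comp_hasDerivAt 0 h1
  have hsym : f'' (0, 1) (v, 0) = f'' (v, 0) (0, 1) :=
    (hF.contDiffAt.isSymmSndFDerivAt (by rw [minSmoothness_of_isRCLikeNormedField]; exact WithTop.coe_le_coe.mpr (le_top : (2 : ℕ∞) ≤ ⊤))) _ _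
  have h3 : HasFDerivAt (fun y => fderiv ℝ F (y, 0))
      (f''.comp ((ContinuousLinearMap.id ℝ E).prod 0)) x :=
    HasFDerivAt.comp x (hF'.differentiable (by simp) (x, 0)).hasFDerivAt
      ((hasFDerivAt_id x).prodMk (hasFDerivAt_const 0 x))
  have h4 : HasFDerivAt (fun y => fderiv ℝ F (y, 0) (0, 1))
      ((ContinuousLinearMap.apply ℝ ℝ ((0, 1) : E × ℝ)).comp
        (f''.comp ((ContinuousLinearMap.id ℝ E).prod 0))) x :=
    (ContinuousLinearMap.apply ℝ ℝ ((0, 1) : E × ℝ)).hasFDerivAt.comp x h3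
  have h5 : fderiv ℝ (fun y => deriv (fun t => F (y, t)) 0) x v = f'' (v, 0) (0, 1) := by
    have : (fun y => deriv (fun t => F (y, t)) 0) = fun y => fderiv ℝ F (y, 0) (0, 1) := by
      funext y; exact slice_deriv hF y
    rw [this, h4.fderiv]; rfl
  have goal := h2
  rw [hsym, ← h5] at goal
  have hfun : (fun t => fderiv ℝ (fun y => F (y, t)) x v) =
      fun t => fderiv ℝ F (x, t) (v, 0) := by
    funext t; exact slice_fderiv hF x t v
  rw [hfun]; exact goal

end stmt18x

open stmt18x in
theorem stmt18.key (m : ℕ)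
    (ρ : (Fin m → ℂ) → ℂ) (hρ : Differentiable ℂ ρ)
    (hreal : ∀ x : Fin m → ℝ, (ρ (stmt18.toC m x)).im = 0)
    (ψ : (Fin m → ℝ) → ℝ → Fin m → ℝ)
    (hψ : ContDiff ℝ (⊤ : ℕ∞) (fun p : (Fin m → ℝ) × ℝ => ψ p.1 p.2))
    (hψ0 : ∀ x, ψ x 0 = 0)
    (Ψ : (Fin m → ℝ) → ℝ) (hΨ : ContDiff ℝ (⊤ : ℕ∞) Ψ)
    (hgen : ∀ x j, deriv (fun t => ψ x t j) 0 = fderiv ℝ Ψ x (Pi.single j 1))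
    (x : Fin m → ℝ) :
    HasDerivAt (fun t => stmt18.ImRest m ρ ψ x t)
      (∑ i, fderiv ℝ (fun y => (ρ (stmt18.toC m y)).re * fderiv ℝ Ψ y (Pi.single i 1)) x
        (Pi.single i 1)) 0 := by
  classical
  set e : Fin m → (Fin m → ℝ) := fun i => Pi.single i 1 with he
  have hψi : ∀ i, ContDiff ℝ (⊤ : ℕ∞) (fun p : (Fin m → ℝ) × ℝ => ψ p.1 p.2 i) :=
    fun i => contDiff_pi.mp hψ i
  -- the x-slice derivatives of ψ
  set b : Fin m → Fin m → ℝ → ℝ :=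
    fun i j t => fderiv ℝ (fun y => ψ y t i) x (e j) with hb
  set D : Fin m → Fin m → ℝ :=
    fun i j => fderiv ℝ (fun y => fderiv ℝ Ψ y (e i)) x (e j) with hD
  set c : Fin m → ℝ := fun i => fderiv ℝ Ψ x (e i) with hc
  -- mixed partials
  have hbd : ∀ i j, HasDerivAt (fun t => b i j t) (D i j) 0 := by
    intro i j
    have h := mixed (hψi i) x (e j)
    have hrw : (fun y => deriv (fun t => ψ y t i) 0) = fun y => fderiv ℝ Ψ y (e i) := by
      funext y; exact hgen y i
    rw [hrw] at h
    exact h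
  -- Jacobian entries
  have hJentry : ∀ t i j, stmt18.Jmat m ψ x t i j
      = (if i = j then 1 else 0) + Complex.I * (b i j t : ℂ) := by
    intro t i j
    have hψd : HasFDerivAt (fun y => ψ y t i) (fderiv ℝ (fun y => ψ y t i) x) x := by
      have : Differentiable ℝ (fun y => ψ y t i) :=
        ((hψi i).comp (contDiff_id.prodMk contDiff_const)).differentiable (by simp)
      exact (this x).hasFDerivAt
    have h1 : HasFDerivAt (fun y : Fin m → ℝ => ((y i : ℝ) : ℂ))
        (Complex.ofRealCLM.comp (ContinuousLinearMap.proj i)) x :=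
      Complex.ofRealCLM.hasFDerivAt.comp x (hasFDerivAt_apply i x)
    have h2 : HasFDerivAt (fun y : Fin m → ℝ => ((ψ y t i : ℝ) : ℂ))
        (Complex.ofRealCLM.comp (fderiv ℝ (fun y => ψ y t i) x)) x :=
      Complex.ofRealCLM.hasFDerivAt.comp x hψd
    have h3 := h2.const_mul Complex.I
    have h : HasFDerivAt (fun y => stmt18.z m ψ y t i)
        ((Complex.ofRealCLM.comp (ContinuousLinearMap.proj i)) +
          Complex.I • (Complex.ofRealCLM.comp (fderiv ℝ (fun y => ψ y t i) x))) x :=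
      h1.add h3
    have heq : stmt18.Jmat m ψ x t i j = fderiv ℝ (fun y => stmt18.z m ψ y t i) x (e j) := rfl
    rw [heq, h.fderiv]
    simp only [ContinuousLinearMap.add_apply, ContinuousLinearMap.smul_apply,
      ContinuousLinearMap.comp_apply, ContinuousLinearMap.proj_apply,
      Complex.ofRealCLM_apply, smul_eq_mul]
    congr 1
    rw [he]
    simp only [Pi.single_apply]
    split <;> simp
  -- entries at time 0
  have hb0 : ∀ i j, b i j 0 = 0 := by
    intro i j
    have : (fun y => ψ y 0 i) = fun _ => (0 : ℝ) := by
      funext y; rw [hψ0 y]; rfl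
    rw [hb]; simp only [this, fderiv_const]; simp
  have hJ0 : ∀ i j, stmt18.Jmat m ψ x 0 i j = (if i = j then (1:ℂ) else 0) := by
    intro i j; rw [hJentry 0 i j, hb0]; simp
  -- entry derivatives
  have hJd : ∀ i j, HasDerivAt (fun t => stmt18.Jmat m ψ x t i j)
      (Complex.I * (D i j : ℂ)) 0 := by
    intro i j
    have : (fun t => stmt18.Jmat m ψ x t i j)
        = fun t => (if i = j then 1 else 0) + Complex.I * (b i j t : ℂ) := by
      funext t; exact hJentry t i j
    rw [this]
    exact (((hbd i j).ofReal_comp).const_mul Complex.I).const_add _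
  -- determinant derivative
  have hdet : HasDerivAt (fun t => (stmt18.Jmat m ψ x t).det)
      (∑ i, Complex.I * (D i i : ℂ)) 0 := by
    have hfun : (fun t => (stmt18.Jmat m ψ x t).det)
        = fun t => ∑ σ : Equiv.Perm (Fin m),
            (Equiv.Perm.sign σ : ℤ) * ∏ i, stmt18.Jmat m ψ x t (σ i) i := by
      funext t; rw [Matrix.det_apply']
    rw [hfun]
    have hder : HasDerivAt (fun t => ∑ σ : Equiv.Perm (Fin m),
        (Equiv.Perm.sign σ : ℤ) * ∏ i, stmt18.Jmat m ψ x t (σ i) i)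
        (∑ σ : Equiv.Perm (Fin m), (Equiv.Perm.sign σ : ℤ) *
          ∑ i, (∏ j ∈ Finset.univ.erase i, stmt18.Jmat m ψ x 0 (σ j) j) •
            (Complex.I * (D (σ i) i : ℂ))) 0 := by
      apply HasDerivAt.fun_sum
      intro σ _
      exact (HasDerivAt.fun_finset_prod (fun i _ => hJd (σ i) i)).const_mul _
    convert hder using 1
    rw [Finset.sum_eq_single (1 : Equiv.Perm (Fin m))]
    · simp only [Equiv.Perm.sign_one, Units.val_one, Int.cast_one, one_mul,
        Equiv.Perm.one_apply]
      apply Finset.sum_congr rfl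
      intro i _
      rw [Finset.prod_congr rfl (fun j _ => hJ0 j j)]
      simp
    · intro σ _ hσ
      have hex : ∀ i : Fin m, ∃ j ∈ Finset.univ.erase i, stmt18.Jmat m ψ x 0 (σ j) j = 0 := by
        intro i
        by_cases hσi : σ i = i
        · obtain ⟨k, hk⟩ : ∃ k, σ k ≠ k := by
            by_contra hcon
            push_neg at hcon
            exact hσ (Equiv.ext hcon)
          have hki : k ≠ i := fun h => hk (h ▸ hσi)
          exact ⟨k, Finset.mem_erase.mpr ⟨hki, Finset.mem_univ k⟩, by
            rw [hJ0]; simp [hk]⟩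
        · refine ⟨σ i, Finset.mem_erase.mpr ⟨hσi, Finset.mem_univ _⟩, ?_⟩
          have : σ (σ i) ≠ σ i := fun h => hσi (σ.injective h)
          rw [hJ0]; simp [this]
      have : ∀ i ∈ (Finset.univ : Finset (Fin m)),
          (∏ j ∈ Finset.univ.erase i, stmt18.Jmat m ψ x 0 (σ j) j) •
            (Complex.I * (D (σ i) i : ℂ)) = 0 := by
        intro i _
        obtain ⟨j, hj, hj0⟩ := hex i
        have hz : (∏ j' ∈ Finset.univ.erase i, stmt18.Jmat m ψ x 0 (σ j') j') = 0 :=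
          Finset.prod_eq_zero hj hj0
        rw [hz, zero_smul]
      rw [Finset.sum_congr rfl this]
      simp
    · intro h
      exact absurd (Finset.mem_univ _) h
  -- the curve t ↦ z(x,t)
  have hzi : ∀ i, HasDerivAt (fun t => stmt18.z m ψ x t i) (Complex.I * (c i : ℂ)) 0 := by
    intro i
    have hdiff : Differentiable ℝ (fun t => ψ x t i) :=
      (hψi i).comp (contDiff_const.prodMk contDiff_id) |>.differentiable (by simp)
    have hbi : HasDerivAt (fun t => ψ x t i) (c i) 0 := by
      have := (hdiff 0).hasDerivAt
      rwa [hgen x i] at this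
    have := ((hbi.ofReal_comp).const_mul Complex.I).const_add ((x i : ℂ))
    exact this
  have hzv : HasDerivAt (fun t => stmt18.z m ψ x t) (fun i => Complex.I * (c i : ℂ)) 0 :=
    hasDerivAt_pi.mpr (fun i => hzi i)
  have hz0 : stmt18.z m ψ x 0 = stmt18.toC m x := by
    funext j
    show (x j : ℂ) + Complex.I * (ψ x 0 j : ℂ) = (x j : ℂ)
    rw [hψ0 x]
    simp
  -- the ρ term
  set B := fderiv ℂ ρ (stmt18.toC m x) with hB
  set A : Fin m → ℂ := fun i => B (Pi.single i (1 : ℂ)) with hA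
  have hρd : HasDerivAt (fun t => ρ (stmt18.z m ψ x t))
      (∑ i, Complex.I * (c i : ℂ) * A i) 0 := by
    have hF : HasFDerivAt ρ (B.restrictScalars ℝ) (stmt18.z m ψ x 0) := by
      rw [hz0]
      exact ((hρ (stmt18.toC m x)).hasFDerivAt).restrictScalars ℝ
    have h := hF.comp_hasDerivAt 0 hzv
    have hval : (B.restrictScalars ℝ) (fun i => Complex.I * (c i : ℂ))
        = ∑ i, Complex.I * (c i : ℂ) * A i := by
      show B (fun i => Complex.I * (c i : ℂ)) = _
      have hv : (fun i => Complex.I * (c i : ℂ))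
          = ∑ j, Pi.single j (Complex.I * (c j : ℂ)) := by
        rw [Finset.univ_sum_single]
      rw [hv, map_sum]
      apply Finset.sum_congr rfl
      intro j _
      have : (Pi.single j (Complex.I * (c j : ℂ)) : Fin m → ℂ)
          = (Complex.I * (c j : ℂ)) • (Pi.single j (1 : ℂ) : Fin m → ℂ) := by
        funext k
        by_cases h : k = j <;> simp [Pi.single_apply, h]
      rw [this, map_smul, smul_eq_mul, hA]
    rw [hval] at h
    exact h
  -- the product and its imaginary part
  have hJdet0 : (stmt18.Jmat m ψ x 0).det = 1 := by
    have : stmt18.Jmat m ψ x 0 = 1 := by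
      ext i j
      rw [hJ0 i j, Matrix.one_apply]
    rw [this, Matrix.det_one]
  have hmul := hρd.mul hdet
  rw [hz0, hJdet0, mul_one] at hmul
  have hIm : HasDerivAt (fun t => stmt18.ImRest m ρ ψ x t)
      (((∑ i, Complex.I * (c i : ℂ) * A i)
        + ρ (stmt18.toC m x) * ∑ i, Complex.I * (D i i : ℂ)).im) 0 :=
    Complex.imCLM.hasFDerivAt.comp_hasDerivAt 0 hmul
  -- identify the derivative
  convert hIm using 1
  have him : ((∑ i, Complex.I * (c i : ℂ) * A i)
      + ρ (stmt18.toC m x) * ∑ i, Complex.I * (D i i : ℂ)).im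
      = ∑ i, (c i * (A i).re + (ρ (stmt18.toC m x)).re * D i i) := by
    rw [Complex.add_im]
    have h1 : (∑ i, Complex.I * (c i : ℂ) * A i).im = ∑ i, c i * (A i).re := by
      rw [Complex.im_sum]
      apply Finset.sum_congr rfl
      intro i _
      simp [Complex.mul_im, Complex.mul_re]
    have h2 : (ρ (stmt18.toC m x) * ∑ i, Complex.I * (D i i : ℂ)).im
        = (ρ (stmt18.toC m x)).re * ∑ i, D i i := by
      rw [Complex.mul_im, hreal x, zero_mul, add_zero]
      congr 1
      rw [Complex.im_sum]
      apply Finset.sum_congr rfl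
      intro i _
      simp
    rw [h1, h2, Finset.mul_sum, ← Finset.sum_add_distrib]
  rw [him]
  -- term-by-term identification with the divergence form
  apply Finset.sum_congr rfl
  intro i _
  -- fderiv of y ↦ Re ρ(toC y)
  have hrd : HasFDerivAt (fun y => (ρ (stmt18.toC m y)).re)
      (Complex.reCLM.comp ((B.restrictScalars ℝ).comp (toCL m))) x := by
    have h1 : HasFDerivAt (fun y : Fin m → ℝ => stmt18.toC m y) (toCL m) x :=
      (toCL m).hasFDerivAt
    have h2 : HasFDerivAt ρ (B.restrictScalars ℝ) (stmt18.toC m x) :=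
      ((hρ (stmt18.toC m x)).hasFDerivAt).restrictScalars ℝ
    exact Complex.reCLM.hasFDerivAt.comp x (h2.comp x h1)
  have hrval : (Complex.reCLM.comp ((B.restrictScalars ℝ).comp (toCL m))) (e i)
      = (A i).re := by
    simp only [ContinuousLinearMap.comp_apply]
    rw [he]
    rw [show (toCL m) (Pi.single i 1) = Pi.single i (1:ℂ) from toCL_single i]
    rfl
  -- fderiv of y ↦ ∂ᵢΨ
  have hgd : HasFDerivAt (fun y => fderiv ℝ Ψ y (e i))
      (fderiv ℝ (fun y => fderiv ℝ Ψ y (e i)) x) x := by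
    have hdiff : Differentiable ℝ (fun y => fderiv ℝ Ψ y (e i)) := by
      have h1 : ContDiff ℝ (⊤ : ℕ∞) (fderiv ℝ Ψ) := hΨ.fderiv_right (by simp)
      exact fun y => ((ContinuousLinearMap.apply ℝ ℝ (e i)).hasFDerivAt.comp y
        ((h1.differentiable (by simp) y).hasFDerivAt)).differentiableAt
    exact (hdiff x).hasFDerivAt
  have hprod := hrd.fun_mul hgd
  have : fderiv ℝ (fun y => (ρ (stmt18.toC m y)).re * fderiv ℝ Ψ y (Pi.single i 1)) x
      (Pi.single i 1)
      = (ρ (stmt18.toC m x)).re * D i i + c i * (A i).re := by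
    have heq : (fun y => (ρ (stmt18.toC m y)).re * fderiv ℝ Ψ y (Pi.single i 1))
        = fun y => (ρ (stmt18.toC m y)).re * fderiv ℝ Ψ y (e i) := rfl
    rw [heq, hprod.fderiv]
    simp only [ContinuousLinearMap.add_apply, ContinuousLinearMap.smul_apply, smul_eq_mul]
    rw [hrval]
  rw [this]
  ring

/-- Y a complex m-manifold with nowhere-vanishing holomorphic m-form
Ω = ρ dz¹∧…∧dz^m (in coordinates), X = {Im z = 0} a compact real slice with
Im Ω|_X = 0, and X_t = {x + iψ(x,t)} a smooth family of special real slices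
(Im Ω|_{X_t} = 0) through X₀ = X, generated by a normal field with potential Ψ
(∂_tψ(·,0) = ∇Ψ).  Then the first-order variation of Im(Ω|_{X_t}) at t = 0 equals
(ΔΨ)·Re(Ω|_X), where Δ is the divergence-type operator of the volume form Re Ω|_X;
in particular ΔΨ = 0.  (Computational core of Theorem 5.3.1 of the paper, in its
classical form.) -/
theorem stmt18 (m : ℕ)
    (ρ : (Fin m → ℂ) → ℂ) (hρ : Differentiable ℂ ρ) (hρ0 : ∀ z, ρ z ≠ 0)
    (hreal : ∀ x : Fin m → ℝ, (ρ (stmt18.toC m x)).im = 0)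
    (ψ : (Fin m → ℝ) → ℝ → Fin m → ℝ)
    (hψ : ContDiff ℝ (⊤ : ℕ∞) (fun p : (Fin m → ℝ) × ℝ => ψ p.1 p.2))
    (hψ0 : ∀ x, ψ x 0 = 0)
    (Ψ : (Fin m → ℝ) → ℝ) (hΨ : ContDiff ℝ (⊤ : ℕ∞) Ψ)
    (hgen : ∀ x j, deriv (fun t => ψ x t j) 0 = fderiv ℝ Ψ x (Pi.single j 1))
    (hspecial : ∀ x t, stmt18.ImRest m ρ ψ x t = 0) :
    (∀ x, deriv (fun t => stmt18.ImRest m ρ ψ x t) 0 =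
      stmt18.lap m ρ Ψ x * (ρ (stmt18.toC m x)).re) ∧
    (∀ x, stmt18.lap m ρ Ψ x = 0) := by
  have key := fun x => stmt18.key m ρ hρ hreal ψ hψ hψ0 Ψ hΨ hgen x
  have hρ0' : ∀ x, (ρ (stmt18.toC m x)).re ≠ 0 := by
    intro x h
    exact hρ0 (stmt18.toC m x) (Complex.ext (by simpa using h) (by simpa using hreal x))
  have hsum0 : ∀ x, (∑ i, fderiv ℝ
      (fun y => (ρ (stmt18.toC m y)).re * fderiv ℝ Ψ y (Pi.single i 1)) x
        (Pi.single i 1)) = 0 := by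
    intro x
    have h1 : (fun t => stmt18.ImRest m ρ ψ x t) = fun _ => (0 : ℝ) :=
      funext (hspecial x)
    have h2 := (key x).deriv
    rw [h1, deriv_const] at h2
    exact h2.symm
  constructor
  · intro x
    rw [(key x).deriv, stmt18.lap, div_mul_cancel₀ _ (hρ0' x)]
  · intro x
    rw [stmt18.lap, hsum0 x, zero_div]


end
end
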